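/- Let M = {(x,y,z) ∈ ℝ³ : x² + y² − z² = −1, z > 0, (x,y,z) ≠ (0,0,1)} and define h(x,y,z) = (s·x, s·y, (z + √2)/2) where s = √((z² + 2√2·z − 2)/(4z² − 4)). Then h maps M into M; in particular, for every (x,y,z) ∈ M one has z > 1, the quantity (z² + 2√2·z − 2)/(4z² − 4) is positive, and h(x,y,z) again satisfies the equation x² + y² − z² = −1 with third coordinate > 1. -/

import Mathlib

open Filter Topology

noncomputable section

/-- The punctured hyperbolic space M = H²(1) ∖ {(0,0,1)}. -/
def M3 : Set (ℝ × ℝ × ℝ) :=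
  {p | p.1 ^ 2 + p.2.1 ^ 2 - p.2.2 ^ 2 = -1 ∧ 0 < p.2.2 ∧ p ≠ (0, 0, 1)}

/-- The scaling factor s(z) = √((z² + 2√2 z − 2)/(4z² − 4)). -/
def sFac (z : ℝ) : ℝ :=
  Real.sqrt ((z ^ 2 + 2 * Real.sqrt 2 * z - 2) / (4 * z ^ 2 - 4))

/-- The map h(x,y,z) = (s(z)·x, s(z)·y, (z + √2)/2). -/
def h3 (p : ℝ × ℝ × ℝ) : ℝ × ℝ × ℝ :=
  (sFac p.2.2 * p.1, sFac p.2.2 * p.2.1, (p.2.2 + Real.sqrt 2) / 2)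

/-- Example 4.1: `h3` maps `M` into `M`; moreover every point of `M` has third
coordinate `> 1`, the quantity under the square root is positive, and the image
again lies on the hyperboloid with third coordinate `> 1`. -/
theorem h3_mapsTo_M3 :
    ∀ p ∈ M3,
      1 < p.2.2 ∧
      0 < (p.2.2 ^ 2 + 2 * Real.sqrt 2 * p.2.2 - 2) / (4 * p.2.2 ^ 2 - 4) ∧
      (h3 p).1 ^ 2 + (h3 p).2.1 ^ 2 - (h3 p).2.2 ^ 2 = -1 ∧
      1 < (h3 p).2.2 ∧
      h3 p ∈ M3 := by
  rintro ⟨x, y, z⟩ ⟨heq, hz, hne⟩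
  simp only at heq hz hne ⊢
  have hs2 : Real.sqrt 2 > 1 := by
    have : (1 : ℝ) < 2 := by norm_num
    nlinarith [Real.sq_sqrt (by norm_num : (2:ℝ) ≥ 0), Real.sqrt_nonneg 2]
  have hz1 : 1 < z := by
    rcases lt_or_eq_of_le (show 1 ≤ z by nlinarith [sq_nonneg x, sq_nonneg y]) with h | h
    · exact h
    · exfalso
      apply hne
      have hx : x = 0 := by nlinarith [sq_nonneg x, sq_nonneg y]
      have hy : y = 0 := by nlinarith [sq_nonneg x, sq_nonneg y]
      simp [hx, hy, ← h]
  have hnum : 0 < z ^ 2 + 2 * Real.sqrt 2 * z - 2 := by nlinarith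
  have hden : 0 < 4 * z ^ 2 - 4 := by nlinarith
  have hpos : 0 < (z ^ 2 + 2 * Real.sqrt 2 * z - 2) / (4 * z ^ 2 - 4) :=
    div_pos hnum hden
  have hs : (sFac z) ^ 2 = (z ^ 2 + 2 * Real.sqrt 2 * z - 2) / (4 * z ^ 2 - 4) := by
    rw [sFac, Real.sq_sqrt hpos.le]
  have hxy : x ^ 2 + y ^ 2 = z ^ 2 - 1 := by linarith
  have h2 : Real.sqrt 2 ^ 2 = 2 := Real.sq_sqrt (by norm_num)
  have hhyp : (sFac z * x) ^ 2 + (sFac z * y) ^ 2 - ((z + Real.sqrt 2) / 2) ^ 2 = -1 := by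
    have : (sFac z * x) ^ 2 + (sFac z * y) ^ 2 = sFac z ^ 2 * (z ^ 2 - 1) := by ring_nf; nlinarith [hxy]
    rw [this, hs]
    have hz21 : z ^ 2 - 1 ≠ 0 := (by nlinarith : z ^ 2 - 1 > 0).ne'
    field_simp
    nlinarith
  have hz2 : 1 < (z + Real.sqrt 2) / 2 := by nlinarith
  simp only [h3, M3, Set.mem_setOf_eq, Prod.mk.injEq, not_and]
  exact ⟨hz1, hpos, hhyp, hz2, hhyp, by linarith, by intro hc; have := congrArg (fun q : ℝ × ℝ × ℝ => q.2.2) hc; simp at this; linarith⟩
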